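/- Let U ⊆ ℂ be a nonempty connected open set, let ω : U → ℂ be analytic with ω′ nonvanishing on U, and suppose s : U → ℂ is an analytic function with s(x)² = ω′(x) for all x ∈ U. Define y₀ = 1/s and y₁ = ω/s. Then y₀ and y₁ are analytic on U, are linearly independent over ℂ, satisfy the differential equation y″(x) + (1/2)·S(ω)(x)·y(x) = 0 on U, and ω(x) = y₁(x)/y₀(x) for all x ∈ U. -/

import Mathlib

/-!
Writing `ω′ = s²`, one computes `S(ω) = -2 s (1/s)″`, so `1/s` solves `y″ + (1/2)S(ω)y = 0`
outright. For `ω/s = ω · (1/s)` the terms `ω″ (1/s) + 2 ω′ (1/s)′ = 2 s′ - 2 s′` cancel, leaving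
`(ω/s)″ = ω (1/s)″`, so `ω/s` is a solution as well. A linear relation `c₀ + c₁ ω = 0` on `U`
forces `c₁ = 0`, since otherwise `ω` would be locally constant, contradicting `ω′ ≠ 0`.
-/

/-- The Schwarzian derivative `S(f) = f‴/f′ − (3/2)(f″/f′)²`. -/
noncomputable def schwarzian (f : ℂ → ℂ) (z : ℂ) : ℂ :=
  deriv (deriv (deriv f)) z / deriv f z - (3 / 2) * (deriv (deriv f) z / deriv f z) ^ 2

open Set Filter Topology

section Derivatives

variable {𝕜 : Type*} [NontriviallyNormedField 𝕜] {U : Set 𝕜} {s ω : 𝕜 → 𝕜} {x : 𝕜}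

theorem deriv_deriv_one_div (hU : IsOpen U) (hs : DifferentiableOn 𝕜 s U)
    (hs0 : ∀ y ∈ U, s y ≠ 0) (hx : x ∈ U) (hs' : DifferentiableAt 𝕜 (deriv s) x) :
    deriv (deriv fun y => 1 / s y) x =
      2 * deriv s x ^ 2 / s x ^ 3 - deriv (deriv s) x / s x ^ 2 := by
  have hderiv : EqOn (deriv fun y => 1 / s y) (fun y => -deriv s y / s y ^ 2) U := fun y hy => by
    simp only [one_div]
    exact deriv_fun_inv'' (hs.differentiableAt (hU.mem_nhds hy)) (hs0 y hy)
  have hsx := (hs.differentiableAt (hU.mem_nhds hx)).hasDerivAt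
  rw [(hderiv.eventuallyEq_of_mem (hU.mem_nhds hx)).deriv_eq,
    (hs'.hasDerivAt.fun_neg.fun_div (hsx.fun_pow 2) (pow_ne_zero 2 (hs0 x hx))).deriv]
  field_simp [hs0 x hx]
  ring

theorem deriv_deriv_div_of_eqOn_deriv_eq_sq (hU : IsOpen U) (hω : DifferentiableOn 𝕜 ω U)
    (hs : DifferentiableOn 𝕜 s U) (hs0 : ∀ y ∈ U, s y ≠ 0)
    (hsq : EqOn (deriv ω) (fun y => s y ^ 2) U) (hx : x ∈ U)
    (hs' : DifferentiableAt 𝕜 (deriv s) x) :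
    deriv (deriv fun y => ω y / s y) x = ω x * deriv (deriv fun y => 1 / s y) x := by
  have hderiv : EqOn (deriv fun y => ω y / s y) (fun y => s y - ω y * deriv s y / s y ^ 2) U :=
    fun y hy => by
      rw [deriv_fun_div (hω.differentiableAt (hU.mem_nhds hy))
        (hs.differentiableAt (hU.mem_nhds hy)) (hs0 y hy), hsq hy]
      field_simp [hs0 y hy]
  have hsx := (hs.differentiableAt (hU.mem_nhds hx)).hasDerivAt
  have hωx := (hω.differentiableAt (hU.mem_nhds hx)).hasDerivAt
  rw [(hderiv.eventuallyEq_of_mem (hU.mem_nhds hx)).deriv_eq,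
    (hsx.fun_sub ((hωx.fun_mul hs'.hasDerivAt).fun_div (hsx.fun_pow 2)
      (pow_ne_zero 2 (hs0 x hx)))).deriv,
    deriv_deriv_one_div hU hs hs0 hx hs', hsq hx]
  field_simp [hs0 x hx]
  ring

theorem eq_zero_of_forall_add_mul_eq_zero (hU : IsOpen U) (hx : x ∈ U) (hω' : deriv ω x ≠ 0)
    {c₀ c₁ : 𝕜} (h : ∀ y ∈ U, c₀ + c₁ * ω y = 0) : c₀ = 0 ∧ c₁ = 0 := by
  have hc₁ : c₁ = 0 := by
    by_contra hc₁
    have hconst : ω =ᶠ[𝓝 x] fun _ => -c₀ / c₁ := by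
      filter_upwards [hU.mem_nhds hx] with y hy
      field_simp
      linear_combination h y hy
    exact hω' (by rw [hconst.deriv_eq, deriv_const])
  exact ⟨by simpa [hc₁] using h x hx, hc₁⟩

end Derivatives

theorem schwarzian_eq_of_eqOn_deriv_eq_sq {U : Set ℂ} {s ω : ℂ → ℂ} {x : ℂ} (hU : IsOpen U)
    (hs : DifferentiableOn ℂ s U) (hs0 : ∀ y ∈ U, s y ≠ 0)
    (hsq : EqOn (deriv ω) (fun y => s y ^ 2) U) (hx : x ∈ U)
    (hs' : DifferentiableAt ℂ (deriv s) x) :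
    schwarzian ω x = -2 * s x * deriv (deriv fun y => 1 / s y) x := by
  have hderiv2 : EqOn (deriv (deriv ω)) (fun y => 2 * s y * deriv s y) U := fun y hy => by
    rw [(hsq.eventuallyEq_of_mem (hU.mem_nhds hy)).deriv_eq,
      ((hs.differentiableAt (hU.mem_nhds hy)).hasDerivAt.fun_pow 2).deriv]
    push_cast
    ring
  have hsx := (hs.differentiableAt (hU.mem_nhds hx)).hasDerivAt
  rw [schwarzian, (hderiv2.eventuallyEq_of_mem (hU.mem_nhds hx)).deriv_eq,
    ((hsx.const_mul 2).fun_mul hs'.hasDerivAt).deriv, hderiv2 hx, hsq hx,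
    deriv_deriv_one_div hU hs hs0 hx hs']
  field_simp [hs0 x hx]
  ring

theorem developing_map_solutions (U : Set ℂ) (hU : IsOpen U) (hUne : U.Nonempty)
    (ω s : ℂ → ℂ)
    (hω : AnalyticOnNhd ℂ ω U) (hω' : ∀ x ∈ U, deriv ω x ≠ 0)
    (hs : AnalyticOnNhd ℂ s U) (hsq : ∀ x ∈ U, s x ^ 2 = deriv ω x) :
    AnalyticOnNhd ℂ (fun x => 1 / s x) U ∧
      AnalyticOnNhd ℂ (fun x => ω x / s x) U ∧
      (∀ c₀ c₁ : ℂ, (∀ x ∈ U, c₀ * (1 / s x) + c₁ * (ω x / s x) = 0) →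
        c₀ = 0 ∧ c₁ = 0) ∧
      (∀ x ∈ U,
        deriv (deriv fun y => 1 / s y) x + 1 / 2 * schwarzian ω x * (1 / s x) = 0) ∧
      (∀ x ∈ U,
        deriv (deriv fun y => ω y / s y) x + 1 / 2 * schwarzian ω x * (ω x / s x) = 0) ∧
      (∀ x ∈ U, ω x = (ω x / s x) / (1 / s x)) := by
  have hs0 : ∀ x ∈ U, s x ≠ 0 := fun x hx h0 =>
    hω' x hx (by rw [← hsq x hx, h0, zero_pow two_ne_zero])
  have hsq' : EqOn (deriv ω) (fun y => s y ^ 2) U := fun x hx => (hsq x hx).symm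
  have hs' x (hx : x ∈ U) : DifferentiableAt ℂ (deriv s) x :=
    (hs.deriv_of_isOpen hU x hx).differentiableAt
  refine ⟨analyticOnNhd_const.div hs hs0, hω.div hs hs0, fun c₀ c₁ h => ?_,
    fun x hx => ?_, fun x hx => ?_, fun x hx => by field_simp [hs0 x hx]⟩
  · obtain ⟨x, hx⟩ := hUne
    refine eq_zero_of_forall_add_mul_eq_zero hU hx (hω' x hx) fun y hy => ?_
    have hrel := h y hy
    rwa [mul_one_div, mul_div_assoc', ← add_div, div_eq_zero_iff, or_iff_left (hs0 y hy)] at hrel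
  · rw [schwarzian_eq_of_eqOn_deriv_eq_sq hU hs.differentiableOn hs0 hsq' hx (hs' x hx)]
    field_simp [hs0 x hx]
    ring
  · rw [schwarzian_eq_of_eqOn_deriv_eq_sq hU hs.differentiableOn hs0 hsq' hx (hs' x hx),
      deriv_deriv_div_of_eqOn_deriv_eq_sq hU hω.differentiableOn hs.differentiableOn hs0 hsq' hx
        (hs' x hx)]
    field_simp [hs0 x hx]
    ring
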